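/- arXiv:0909.1472 — 2 statements merged into one kernel-verified Lean document; each statement's English description precedes it below -/
import Mathlib

section
/- Let M_1 = 1 and let M_2, M_3, … be i.i.d. marks with P(M_l = m) = w_m/ℓ_n for m ∈ [n], and let J_j = 1{M_j ∉ {1} ∪ {M_2,…,M_{j-1}}}. Then for every m ≥ 1, E[Σ_{j=2}^m (1 - J_j)] ≤ m w_1/ℓ_n + m(m-1) ν_n/(2 ℓ_n), where ν_n = Σ_{j∈[n]} w_j²/ℓ_n. -/
/-!
A mark `M_j` fails to be new only if it equals `1` or collides with one of the `j - 2` earlier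
marks `M_2, …, M_{j-1}`. By independence two distinct marks collide with probability
`∑_a (w_a / ℓ_n)² = ν_n / ℓ_n`, so the union bound gives
`P(J_j = 0) ≤ w_1 / ℓ_n + (j - 2) ν_n / ℓ_n`, and summing over `2 ≤ j ≤ m` yields the claim.
-/

open MeasureTheory ProbabilityTheory Filter Set Real
open scoped ENNReal Topology Classical

namespace ProbabilityTheory

variable {Ω α : Type*} [MeasurableSpace Ω] {μ : Measure Ω}

lemma IndepFun.measureReal_eq_le_sum_sq [IsFiniteMeasure μ] [MeasurableSpace α]
    [MeasurableSingletonClass α] {X Y : Ω → α} (hXY : IndepFun X Y μ) {s : Finset α}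
    (hY : ∀ ω, Y ω ∈ s) {p : α → ℝ} (hpX : ∀ a ∈ s, μ.real {ω | X ω = a} = p a)
    (hpY : ∀ a ∈ s, μ.real {ω | Y ω = a} = p a) :
    μ.real {ω | X ω = Y ω} ≤ ∑ a ∈ s, p a ^ 2 :=
  calc μ.real {ω | X ω = Y ω}
      ≤ μ.real (⋃ a ∈ s, {ω | X ω = a} ∩ {ω | Y ω = a}) :=
        measureReal_mono (fun ω hω => Set.mem_biUnion (hY ω) ⟨hω, rfl⟩) (measure_ne_top _ _)
    _ ≤ ∑ a ∈ s, μ.real ({ω | X ω = a} ∩ {ω | Y ω = a}) := measureReal_biUnion_finset_le _ _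
    _ = ∑ a ∈ s, p a ^ 2 := by
        refine Finset.sum_congr rfl fun a ha => ?_
        have hmul : μ ({ω | X ω = a} ∩ {ω | Y ω = a}) = μ {ω | X ω = a} * μ {ω | Y ω = a} :=
          hXY.measure_inter_preimage_eq_mul _ _ (measurableSet_singleton a)
            (measurableSet_singleton a)
        rw [measureReal_def, hmul, ENNReal.toReal_mul, ← measureReal_def,
          ← measureReal_def, hpX a ha, hpY a ha, sq]

end ProbabilityTheory

namespace MeasureTheory

variable {Ω : Type*} [MeasurableSpace Ω] (μ : Measure Ω)

lemma measureReal_not_new_le {α : Type*} (M : ℕ → Ω → α) (a : α) (s : Finset ℕ) (j : ℕ)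
    {c : ℝ} (hc : ∀ i ∈ s, μ.real {ω | M i ω = M j ω} ≤ c) :
    μ.real {ω | ¬(M j ω ≠ a ∧ ∀ i ∈ s, M i ω ≠ M j ω)} ≤ μ.real {ω | M j ω = a} + s.card * c := by
  have hunion : {ω | ¬(M j ω ≠ a ∧ ∀ i ∈ s, M i ω ≠ M j ω)} =
      {ω | M j ω = a} ∪ ⋃ i ∈ s, {ω | M i ω = M j ω} := by
    ext ω
    simp only [mem_ofPred_eq, mem_union, mem_iUnion, exists_prop, not_and_or, not_not,
      not_forall]
  rw [hunion, ← nsmul_eq_mul]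
  exact (measureReal_union_le _ _).trans <| add_le_add le_rfl <|
    (measureReal_biUnion_finset_le _ _).trans (Finset.sum_le_card_nsmul _ _ _ hc)

lemma integral_sum_one_sub_ite [IsFiniteMeasure μ] {ι : Type*} (t : Finset ι)
    (P : ι → Ω → Prop) [∀ j, DecidablePred (P j)] (hP : ∀ j ∈ t, MeasurableSet {ω | P j ω}) :
    ∫ ω, ∑ j ∈ t, (1 - if P j ω then 1 else 0 : ℝ) ∂μ = ∑ j ∈ t, μ.real {ω | ¬P j ω} := by
  have hind : ∀ j ω, (1 - if P j ω then 1 else 0 : ℝ) = {ω | ¬P j ω}.indicator 1 ω := by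
    intro j ω
    by_cases h : P j ω <;> simp [h]
  simp only [hind]
  rw [integral_finsetSum _ fun j hj => (integrable_const 1).indicator (hP j hj).compl]
  exact Finset.sum_congr rfl fun j hj => integral_indicator_one (hP j hj).compl

end MeasureTheory

lemma sum_Icc_two_add_card_mul_le {a b : ℝ} (ha : 0 ≤ a) (hb : 0 ≤ b) (m : ℕ) :
    ∑ j ∈ Finset.Icc 2 m, (a + (Finset.Icc 2 (j - 1)).card * b) ≤
      m * a + m * (m - 1) / 2 * b := by
  induction m with
  | zero => simp
  | succ k ih =>
    rcases Nat.eq_zero_or_pos k with rfl | hk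
    · simpa using ha
    rw [Finset.sum_Icc_succ_top (by omega), Nat.add_sub_cancel, Nat.card_Icc,
      Nat.cast_sub (by omega)]
    have hk' : (1 : ℝ) ≤ k := by exact_mod_cast hk
    push_cast
    nlinarith

theorem stmt6_general {Ω : Type*} [MeasurableSpace Ω] (μ : Measure Ω) [IsProbabilityMeasure μ]
    (n : ℕ) (hn : 1 ≤ n) (w : ℕ → ℝ) (hw : ∀ j ∈ Finset.Icc 1 n, 0 < w j)
    (ℓ ν : ℝ) (hℓ : ℓ = ∑ j ∈ Finset.Icc 1 n, w j)
    (hν : ν = ∑ j ∈ Finset.Icc 1 n, (w j) ^ 2 / ℓ)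
    (M : ℕ → Ω → ℕ)
    (hmeas : ∀ l, Measurable (M l))
    (hrange : ∀ l ω, M l ω ∈ Finset.Icc 1 n)
    (hindep : iIndepFun (fun l : ℕ => M (l + 2)) μ)
    (hdist : ∀ l : ℕ, 2 ≤ l → ∀ m ∈ Finset.Icc 1 n,
      μ {ω | M l ω = m} = ENNReal.ofReal (w m / ℓ)) :
    let J : ℕ → Ω → ℝ := fun j ω =>
      if (M j ω ≠ 1 ∧ ∀ i ∈ Finset.Icc 2 (j - 1), M i ω ≠ M j ω) then 1 else 0
    ∀ m : ℕ, 1 ≤ m →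
      (∫ ω, (∑ j ∈ Finset.Icc 2 m, (1 - J j ω)) ∂μ) ≤
        m * w 1 / ℓ + m * (m - 1) * ν / (2 * ℓ) := by
  dsimp only
  intro m _
  have h1n : 1 ∈ Finset.Icc 1 n := Finset.mem_Icc.mpr ⟨le_rfl, hn⟩
  have hℓ_pos : 0 < ℓ := hℓ ▸ Finset.sum_pos hw ⟨1, h1n⟩
  have hν_nonneg : 0 ≤ ν := hν ▸ Finset.sum_nonneg fun j _ => by positivity
  have hν_eq : ν / ℓ = ∑ a ∈ Finset.Icc 1 n, (w a / ℓ) ^ 2 := by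
    rw [hν, Finset.sum_div]
    exact Finset.sum_congr rfl fun a _ => by ring
  have hprob : ∀ l, 2 ≤ l → ∀ a ∈ Finset.Icc 1 n, μ.real {ω | M l ω = a} = w a / ℓ :=
    fun l hl a ha => by
      rw [measureReal_def, hdist l hl a ha, ENNReal.toReal_ofReal (div_pos (hw a ha) hℓ_pos).le]
  have hcollide : ∀ j, 2 ≤ j → ∀ i ∈ Finset.Icc 2 (j - 1),
      μ.real {ω | M i ω = M j ω} ≤ ν / ℓ := by
    intro j hj i hi
    have hi2 := (Finset.mem_Icc.mp hi).1
    have hXY : IndepFun (M i) (M j) μ := by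
      simpa [Nat.sub_add_cancel hi2, Nat.sub_add_cancel hj] using
        hindep.indepFun (i := i - 2) (j := j - 2) (by grind)
    exact hν_eq ▸ hXY.measureReal_eq_le_sum_sq (hrange j) (hprob i hi2) (hprob j hj)
  rw [integral_sum_one_sub_ite μ _
    (fun j ω => M j ω ≠ 1 ∧ ∀ i ∈ Finset.Icc 2 (j - 1), M i ω ≠ M j ω)
    fun j _ => measurableSet_setOfPred.mpr (by fun_prop)]
  calc _ ≤ ∑ j ∈ Finset.Icc 2 m, (w 1 / ℓ + (Finset.Icc 2 (j - 1)).card * (ν / ℓ)) :=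
        Finset.sum_le_sum fun j hj => by
          have hj2 := (Finset.mem_Icc.mp hj).1
          exact hprob j hj2 1 h1n ▸ measureReal_not_new_le μ M 1 _ j (hcollide j hj2)
    _ ≤ m * (w 1 / ℓ) + m * (m - 1) / 2 * (ν / ℓ) :=
        sum_Icc_two_add_card_mul_le (div_pos (hw 1 h1n) hℓ_pos).le (by positivity) m
    _ = m * w 1 / ℓ + m * (m - 1) * ν / (2 * ℓ) := by ring

/-- with `M_1 = 1` and `(M_j)_{j≥2}` i.i.d. marks with
`P(M=m)=w_m/ℓ_n`, and `J_j = 1{M_j ∉ {1} ∪ {M_2,…,M_{j-1}}}`, for every `m ≥ 1`,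
`E[Σ_{j=2}^m (1-J_j)] ≤ m w_1/ℓ_n + m(m-1)ν_n/(2ℓ_n)` with `ν_n = Σ w_j²/ℓ_n`. -/
theorem stmt6 {Ω : Type*} [MeasurableSpace Ω] (μ : Measure Ω) [IsProbabilityMeasure μ]
    (n : ℕ) (hn : 1 ≤ n) (w : ℕ → ℝ) (hw : ∀ j ∈ Finset.Icc 1 n, 0 < w j)
    (ℓ ν : ℝ) (hℓ : ℓ = ∑ j ∈ Finset.Icc 1 n, w j)
    (hν : ν = ∑ j ∈ Finset.Icc 1 n, (w j) ^ 2 / ℓ)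
    (M : ℕ → Ω → ℕ)
    (hM1 : ∀ ω, M 1 ω = 1)
    (hmeas : ∀ l, Measurable (M l))
    (hrange : ∀ l ω, M l ω ∈ Finset.Icc 1 n)
    (hindep : iIndepFun (fun l : ℕ => M (l + 2)) μ)
    (hdist : ∀ l : ℕ, 2 ≤ l → ∀ m ∈ Finset.Icc 1 n,
      μ {ω | M l ω = m} = ENNReal.ofReal (w m / ℓ)) :
    let J : ℕ → Ω → ℝ := fun j ω =>
      if (M j ω ≠ 1 ∧ ∀ i ∈ Finset.Icc 2 (j - 1), M i ω ≠ M j ω) then 1 else 0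
    ∀ m : ℕ, 1 ≤ m →
      (∫ ω, (∑ j ∈ Finset.Icc 2 m, (1 - J j ω)) ∂μ) ≤
        m * w 1 / ℓ + m * (m - 1) * ν / (2 * ℓ) :=
  stmt6_general μ n hn w hw ℓ ν hℓ hν M hmeas hrange hindep hdist
end

section
/- Let G be an inhomogeneous random graph on vertex set [n] with independent edges, where edge {i,j} is present with probability p_{ij} = 1 − exp(−w_i w_j/ℓ_n), ℓ_n = Σ_i w_i. For a vertex v, let C(v) be its connected component and W(v) = Σ_{u ∈ C(v)} w_u its weight. Then for any two distinct vertices i, j ∈ [n], E[W(i) W(j) 1{i and j are in different components}] ≤ E[W(i)] · E[W(j)]. -/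
open MeasureTheory ProbabilityTheory Filter Set Real
open scoped ENNReal Topology Classical

/-!
Decompose according to the cluster `C(i) = S`. On `{C(i) = S, j ∉ S}` we have `W(i) = w(S)` and
`W(j)` equals the cluster weight of `j` in the graph with all edges touching `S` deleted. The
event `{C(i) = S}` is determined by the edges touching `S`, that weight by the edges avoiding `S`;
these edge sets are disjoint, so the two are independent, and deleting edges only lowers weights.
Hence `E[W(i) W(j) 1{i ↮ j}] ≤ ∑_S w(S) P(C(i) = S) E[W(j)] = E[W(i)] E[W(j)]`.
-/

open Function

namespace SimpleGraph

variable {V : Type*}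

def avoiding (G : SimpleGraph V) (S : Set V) : SimpleGraph V where
  Adj a b := G.Adj a b ∧ a ∉ S ∧ b ∉ S
  symm := ⟨fun _ _ h => ⟨h.1.symm, h.2.2, h.2.1⟩⟩
  loopless := ⟨fun _ h => G.irrefl h.1⟩

@[simp]
theorem avoiding_adj {G : SimpleGraph V} {S : Set V} {a b : V} :
    (G.avoiding S).Adj a b ↔ G.Adj a b ∧ a ∉ S ∧ b ∉ S :=
  Iff.rfl

theorem avoiding_le (G : SimpleGraph V) (S : Set V) : G.avoiding S ≤ G :=
  fun _ _ h => (avoiding_adj.1 h).1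

theorem avoiding_congr {G G' : SimpleGraph V} {S : Set V}
    (h : ∀ a b, a ∉ S → b ∉ S → (G.Adj a b ↔ G'.Adj a b)) : G.avoiding S = G'.avoiding S := by
  ext a b
  simp only [avoiding_adj]
  exact ⟨fun ⟨hab, ha, hb⟩ => ⟨(h a b ha hb).1 hab, ha, hb⟩,
    fun ⟨hab, ha, hb⟩ => ⟨(h a b ha hb).2 hab, ha, hb⟩⟩

theorem Reachable.mono_of_invariant {G H : SimpleGraph V} {P : V → Prop}
    (hGH : ∀ a b, P a → G.Adj a b → P b ∧ H.Adj a b) {u v : V} (h : G.Reachable u v)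
    (hu : P u) : P v ∧ H.Reachable u v := by
  obtain ⟨p⟩ := h
  induction p with
  | nil => exact ⟨hu, .rfl⟩
  | cons hadj _ ih =>
    obtain ⟨hb, hH⟩ := hGH _ _ hu hadj
    obtain ⟨hv, hr⟩ := ih hb
    exact ⟨hv, hH.reachable.trans hr⟩

theorem adj_iff_of_forall_lt [LinearOrder V] {G G' : SimpleGraph V} {P : V → V → Prop}
    (hP : ∀ a b, P a b → P b a) (h : ∀ a b, a < b → P a b → (G.Adj a b ↔ G'.Adj a b)) (a b : V)
    (hab : P a b) : G.Adj a b ↔ G'.Adj a b := by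
  rcases lt_trichotomy a b with hlt | rfl | hgt
  · exact h a b hlt hab
  · simp
  · rw [G.adj_comm, G'.adj_comm]
    exact h b a hgt (hP a b hab)

-- `DecidableEq V` is taken as given, not classical, so that `Reachable` is decided by the same
-- instance as in the statement over `Fin n`.
variable [Fintype V] [DecidableEq V]

noncomputable def clusterFinset (G : SimpleGraph V) (v : V) : Finset V :=
  Finset.univ.filter (G.Reachable v)

theorem mem_clusterFinset {G : SimpleGraph V} {v u : V} :
    u ∈ G.clusterFinset v ↔ G.Reachable v u := by
  simp [clusterFinset]

theorem clusterFinset_eq_of_adj_iff {G G' : SimpleGraph V} {S : Finset V} {i : V}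
    (h : ∀ a b, a ∈ S → (G.Adj a b ↔ G'.Adj a b)) (hS : G.clusterFinset i = S) :
    G'.clusterFinset i = S := by
  have hmem : ∀ u, G.Reachable i u ↔ u ∈ S := fun u => by rw [← hS, mem_clusterFinset]
  have hi : i ∈ S := (hmem i).1 .rfl
  ext u
  rw [mem_clusterFinset]
  constructor
  · refine fun hu => (hu.mono_of_invariant (H := G) (fun a b ha hab => ?_) hi).1
    have hab' := (h a b ha).2 hab
    exact ⟨(hmem b).1 (((hmem a).2 ha).trans hab'.reachable), hab'⟩
  · refine fun hu => (((hmem u).2 hu).mono_of_invariant (H := G') (fun a b ha hab => ?_) hi).2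
    exact ⟨(hmem b).1 (((hmem a).2 ha).trans hab.reachable), (h a b ha).1 hab⟩

theorem reachable_iff_avoiding_clusterFinset {G : SimpleGraph V} {i j : V}
    (hij : ¬ G.Reachable i j) (u : V) :
    (G.avoiding (G.clusterFinset i)).Reachable j u ↔ G.Reachable j u := by
  refine ⟨.mono (G.avoiding_le _), fun hu => (hu.mono_of_invariant (P := fun v => ¬ G.Reachable i v)
    (fun a b ha hab => ?_) hij).2⟩
  have hb : ¬ G.Reachable i b := fun hb => ha (hb.trans hab.symm.reachable)
  simp only [avoiding_adj, Finset.mem_coe, mem_clusterFinset]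
  exact ⟨hb, hab, ha, hb⟩

noncomputable def componentWeight (G : SimpleGraph V) (w : V → ℝ) (v : V) : ℝ :=
  ∑ u, if G.Reachable v u then w u else 0

theorem componentWeight_eq_sum_clusterFinset (G : SimpleGraph V) (w : V → ℝ) (v : V) :
    G.componentWeight w v = ∑ u ∈ G.clusterFinset v, w u := by
  rw [clusterFinset, Finset.sum_filter]
  rfl

theorem componentWeight_nonneg {w : V → ℝ} (hw : ∀ u, 0 ≤ w u) (G : SimpleGraph V) (v : V) :
    0 ≤ G.componentWeight w v :=
  Finset.sum_nonneg fun u _ => by split_ifs <;> simp [hw u]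

theorem componentWeight_mono {w : V → ℝ} (hw : ∀ u, 0 ≤ w u) {G H : SimpleGraph V} (hGH : G ≤ H)
    (v : V) :
    G.componentWeight w v ≤ H.componentWeight w v := by
  refine Finset.sum_le_sum fun u _ => ?_
  by_cases hu : G.Reachable v u
  · simp [hu, hu.mono hGH]
  · rw [if_neg hu]
    split_ifs <;> simp [hw u]

theorem componentWeight_eq_sum_indicator (G : SimpleGraph V) (w : V → ℝ) (i : V) :
    G.componentWeight w i =
      ∑ S : Finset V, (∑ u ∈ S, w u) * (if G.clusterFinset i = S then 1 else 0) := by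
  rw [Finset.sum_eq_single (G.clusterFinset i) (fun S _ hS => by simp [Ne.symm hS]) (by simp),
    componentWeight_eq_sum_clusterFinset]
  simp

theorem componentWeight_mul_not_reachable_le {w : V → ℝ} (hw : ∀ u, 0 ≤ w u) (G : SimpleGraph V)
    (i j : V) :
    G.componentWeight w i * G.componentWeight w j * (if ¬ G.Reachable i j then 1 else 0) ≤
      ∑ S : Finset V, (∑ u ∈ S, w u) *
        ((if G.clusterFinset i = S then 1 else 0) * (G.avoiding S).componentWeight w j) := by
  rw [Finset.sum_eq_single (G.clusterFinset i) (fun S _ hS => by simp [Ne.symm hS]) (by simp)]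
  simp only [if_true, one_mul]
  by_cases hij : G.Reachable i j
  · simp only [hij, not_true_eq_false, if_false, mul_zero]
    exact mul_nonneg (Finset.sum_nonneg fun u _ => hw u) (componentWeight_nonneg hw _ _)
  · have hj : (G.avoiding (G.clusterFinset i)).componentWeight w j = G.componentWeight w j :=
      Finset.sum_congr rfl fun u _ => by simp only [reachable_iff_avoiding_clusterFinset hij]
    rw [if_pos hij, mul_one, hj, componentWeight_eq_sum_clusterFinset G w i]

end SimpleGraph

theorem measurable_comap_of_factorsThrough {α β γ : Type*} [MeasurableSpace β] [Countable β]
    [MeasurableSingletonClass β] [MeasurableSpace γ] {X : α → β} {f : α → γ}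
    (hf : FactorsThrough f X) : Measurable[MeasurableSpace.comap X ‹_›] f := by
  intro s _
  refine ⟨X '' (f ⁻¹' s), (Set.to_countable _).measurableSet, ?_⟩
  ext a
  exact ⟨fun ⟨b, hb, hba⟩ => (hf hba ▸ hb : f a ∈ s), fun ha => ⟨a, ha, rfl⟩⟩

theorem ProbabilityTheory.iIndepFun.indepFun_of_factorsThrough {ι Ω β γ δ : Type*}
    [MeasurableSpace Ω] {μ : Measure Ω} [MeasurableSpace β] [Countable β]
    [MeasurableSingletonClass β] [MeasurableSpace γ] [MeasurableSpace δ] {X : ι → Ω → β}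
    (hX : iIndepFun X μ) (hXm : ∀ i, Measurable (X i)) {S T : Finset ι} (hST : Disjoint S T)
    {f : Ω → γ} {g : Ω → δ} (hf : FactorsThrough f fun ω (i : S) => X i ω)
    (hg : FactorsThrough g fun ω (i : T) => X i ω) : IndepFun f g μ := by
  have hST := hX.indepFun_finset S T hST hXm
  rw [IndepFun_iff_Indep] at hST ⊢
  exact indep_of_indep_of_le_right
    (indep_of_indep_of_le_left hST (measurable_comap_of_factorsThrough hf).comap_le)
    (measurable_comap_of_factorsThrough hg).comap_le

section RandomGraph

variable {Ω V : Type*} [LinearOrder V] {G : Ω → SimpleGraph V}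

noncomputable def edgeIndicator (G : Ω → SimpleGraph V) (p : {p : V × V // p.1 < p.2}) (ω : Ω) :
    Bool :=
  decide ((G ω).Adj p.1.1 p.1.2)

theorem measurable_edgeIndicator [MeasurableSpace Ω]
    (hmeas : ∀ a b, Measurable fun ω => (G ω).Adj a b)
    (p : {p : V × V // p.1 < p.2}) : Measurable (edgeIndicator G p) :=
  measurable_to_bool <| by simpa [edgeIndicator, Set.preimage] using hmeas p.1.1 p.1.2

variable [Fintype V]

theorem adj_iff_of_edgeIndicator_eq {P : V → V → Prop} (hP : ∀ a b, P a b → P b a) {ω ω' : Ω}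
    (h : (fun p : (Finset.univ.filter fun p : {p : V × V // p.1 < p.2} => P p.1.1 p.1.2) =>
      edgeIndicator G p ω) = fun p => edgeIndicator G p.1 ω') (a b : V) (hab : P a b) :
    (G ω).Adj a b ↔ (G ω').Adj a b := by
  refine SimpleGraph.adj_iff_of_forall_lt hP (fun a b hlt hab => ?_) a b hab
  simpa [edgeIndicator] using congrFun h ⟨⟨(a, b), hlt⟩, by simpa using hab⟩

variable [MeasurableSpace Ω] {μ : Measure Ω}

theorem measurable_comp_of_adj_measurable (hmeas : ∀ a b, Measurable fun ω => (G ω).Adj a b)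
    {γ : Type*} [MeasurableSpace γ] (f : SimpleGraph V → γ) : Measurable fun ω => f (G ω) := by
  have hGeq : FactorsThrough G fun ω p => edgeIndicator G p ω :=
    fun ω ω' h => SimpleGraph.ext <| funext₂ fun a b => propext <|
      SimpleGraph.adj_iff_of_forall_lt (P := fun _ _ => True) (fun _ _ _ => trivial)
        (fun a b hlt _ => by simpa [edgeIndicator] using congrFun h ⟨(a, b), hlt⟩) a b trivial
  refine (measurable_comap_of_factorsThrough (fun ω ω' h => congrArg f (hGeq h))).mono ?_ le_rfl
  exact (measurable_pi_lambda _ fun p => measurable_edgeIndicator hmeas p).comap_le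

theorem integrable_comp_of_adj_measurable [IsFiniteMeasure μ]
    (hmeas : ∀ a b, Measurable fun ω => (G ω).Adj a b) (f : SimpleGraph V → ℝ) :
    Integrable (fun ω => f (G ω)) μ := by
  obtain ⟨C, hC⟩ := Finite.exists_le fun H => ‖f H‖
  exact .of_bound (measurable_comp_of_adj_measurable hmeas f).aestronglyMeasurable C
    (ae_of_all _ fun ω => hC (G ω))

theorem indepFun_comp_of_adj_determined (hmeas : ∀ a b, Measurable fun ω => (G ω).Adj a b)
    (hindep : iIndepFun (edgeIndicator G) μ) {P Q : V → V → Prop} (hP : ∀ a b, P a b → P b a)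
    (hQ : ∀ a b, Q a b → Q b a) (hPQ : ∀ a b, P a b → ¬ Q a b) {γ δ : Type*} [MeasurableSpace γ]
    [MeasurableSpace δ] {f : SimpleGraph V → γ} {g : SimpleGraph V → δ}
    (hf : ∀ H H' : SimpleGraph V, (∀ a b, P a b → (H.Adj a b ↔ H'.Adj a b)) → f H = f H')
    (hg : ∀ H H' : SimpleGraph V, (∀ a b, Q a b → (H.Adj a b ↔ H'.Adj a b)) → g H = g H') :
    IndepFun (fun ω => f (G ω)) (fun ω => g (G ω)) μ := by
  refine hindep.indepFun_of_factorsThrough (measurable_edgeIndicator hmeas)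
    (S := Finset.univ.filter fun p => P p.1.1 p.1.2)
    (T := Finset.univ.filter fun p => Q p.1.1 p.1.2) ?_
    (fun ω ω' h => hf _ _ (adj_iff_of_edgeIndicator_eq hP h))
    (fun ω ω' h => hg _ _ (adj_iff_of_edgeIndicator_eq hQ h))
  exact Finset.disjoint_filter.2 fun p _ hp => hPQ _ _ hp

theorem indepFun_clusterFinset_eq_avoiding_componentWeight
    (hmeas : ∀ a b, Measurable fun ω => (G ω).Adj a b) (hindep : iIndepFun (edgeIndicator G) μ)
    (w : V → ℝ) (i j : V) (S : Finset V) :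
    IndepFun (fun ω => if (G ω).clusterFinset i = S then (1 : ℝ) else 0)
      (fun ω => ((G ω).avoiding S).componentWeight w j) μ := by
  refine indepFun_comp_of_adj_determined hmeas hindep (P := fun a b => a ∈ S ∨ b ∈ S)
    (Q := fun a b => a ∉ S ∧ b ∉ S) (f := fun H => if H.clusterFinset i = S then (1 : ℝ) else 0)
    (g := fun H => (H.avoiding S).componentWeight w j) (fun a b => Or.symm) (fun a b => And.symm)
    (fun a b hP hQ => hP.elim hQ.1 hQ.2) (fun H H' h => ?_)
    (fun H H' h => by rw [SimpleGraph.avoiding_congr fun a b ha hb => h a b ⟨ha, hb⟩])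
  exact if_congr ⟨SimpleGraph.clusterFinset_eq_of_adj_iff fun a b ha => h a b (.inl ha),
    SimpleGraph.clusterFinset_eq_of_adj_iff fun a b ha => (h a b (.inl ha)).symm⟩ rfl rfl

open SimpleGraph in
theorem integral_componentWeight_mul_not_reachable_le [IsFiniteMeasure μ] {w : V → ℝ}
    (hw : ∀ u, 0 ≤ w u) (hmeas : ∀ a b, Measurable fun ω => (G ω).Adj a b)
    (hindep : iIndepFun (edgeIndicator G) μ) (i j : V) :
    ∫ ω, (G ω).componentWeight w i * (G ω).componentWeight w j *
        (if ¬ (G ω).Reachable i j then 1 else 0) ∂μ ≤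
      (∫ ω, (G ω).componentWeight w i ∂μ) * ∫ ω, (G ω).componentWeight w j ∂μ := by
  have hint := integrable_comp_of_adj_measurable (μ := μ) hmeas
  set A : Finset V → SimpleGraph V → ℝ := fun S H => if H.clusterFinset i = S then 1 else 0
  set R : Finset V → SimpleGraph V → ℝ := fun S H => (H.avoiding S).componentWeight w j
  calc ∫ ω, (G ω).componentWeight w i * (G ω).componentWeight w j *
          (if ¬ (G ω).Reachable i j then 1 else 0) ∂μ
      ≤ ∫ ω, ∑ S, (∑ u ∈ S, w u) * (A S (G ω) * R S (G ω)) ∂μ :=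
        integral_mono (hint fun H => H.componentWeight w i * H.componentWeight w j *
            (if ¬ H.Reachable i j then 1 else 0))
          (hint fun H => ∑ S, (∑ u ∈ S, w u) * (A S H * R S H))
          fun ω => componentWeight_mul_not_reachable_le hw (G ω) i j
    _ = ∑ S, (∑ u ∈ S, w u) * ((∫ ω, A S (G ω) ∂μ) * ∫ ω, R S (G ω) ∂μ) := by
        rw [integral_finsetSum _ fun S _ => hint fun H => (∑ u ∈ S, w u) * (A S H * R S H)]
        refine Finset.sum_congr rfl fun S _ => ?_
        have hAR := indepFun_clusterFinset_eq_avoiding_componentWeight hmeas hindep w i j S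
        rw [integral_const_mul, hAR.integral_fun_mul_eq_mul_integral
          (hint (A S)).aestronglyMeasurable (hint (R S)).aestronglyMeasurable]
    _ ≤ ∑ S, (∑ u ∈ S, w u) * ((∫ ω, A S (G ω) ∂μ) * ∫ ω, (G ω).componentWeight w j ∂μ) := by
        refine Finset.sum_le_sum fun S _ => mul_le_mul_of_nonneg_left
          (mul_le_mul_of_nonneg_left ?_ ?_) (Finset.sum_nonneg fun u _ => hw u)
        · exact integral_mono (hint (R S)) (hint fun H => H.componentWeight w j)
            fun ω => componentWeight_mono hw (avoiding_le _ _) j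
        · exact integral_nonneg fun ω => show (0 : ℝ) ≤ A S (G ω) by positivity
    _ = (∑ S, (∑ u ∈ S, w u) * ∫ ω, A S (G ω) ∂μ) * ∫ ω, (G ω).componentWeight w j ∂μ := by
        simp_rw [← mul_assoc, ← Finset.sum_mul]
    _ = (∫ ω, (G ω).componentWeight w i ∂μ) * ∫ ω, (G ω).componentWeight w j ∂μ := by
        rw [integral_congr_ae (ae_of_all _ fun ω => componentWeight_eq_sum_indicator (G ω) w i),
          integral_finsetSum _ fun S _ => hint fun H => (∑ u ∈ S, w u) * A S H]
        simp_rw [integral_const_mul]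

end RandomGraph

theorem stmt10_general {Ω : Type*} [MeasurableSpace Ω] (μ : Measure Ω) [IsProbabilityMeasure μ]
    (n : ℕ) (w : Fin n → ℝ) (hw : ∀ i, 0 < w i)
    (G : Ω → SimpleGraph (Fin n))
    (hmeas : ∀ i j : Fin n, Measurable fun ω => (G ω).Adj i j)
    (hindep : iIndepFun
      (fun (p : {p : Fin n × Fin n // p.1 < p.2}) (ω : Ω) =>
        decide ((G ω).Adj p.1.1 p.1.2)) μ) :
    ∀ i j : Fin n, i ≠ j →
      (∫ ω, ((∑ u, if (G ω).Reachable i u then w u else 0) *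
             (∑ u, if (G ω).Reachable j u then w u else 0) *
             (if ¬ (G ω).Reachable i j then (1:ℝ) else 0)) ∂μ) ≤
      (∫ ω, (∑ u, if (G ω).Reachable i u then w u else 0) ∂μ) *
      (∫ ω, (∑ u, if (G ω).Reachable j u then w u else 0) ∂μ) :=
  fun i j _ => integral_componentWeight_mul_not_reachable_le (fun u => (hw u).le) hmeas hindep i j

/-- in the rank-1 inhomogeneous random graph with independent edges
and `p_{ij} = 1 − exp(−w_i w_j/ℓ_n)`, for the cluster weights
`W(v) = Σ_{u ∈ C(v)} w_u`, any two distinct vertices `i ≠ j` satisfy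
`E[W(i)W(j) 1{i ↮ j}] ≤ E[W(i)]·E[W(j)]` (a consequence of the BK inequality). -/
theorem stmt10 {Ω : Type*} [MeasurableSpace Ω] (μ : Measure Ω) [IsProbabilityMeasure μ]
    (n : ℕ) (w : Fin n → ℝ) (hw : ∀ i, 0 < w i) (ℓ : ℝ) (hℓ : ℓ = ∑ i, w i)
    (G : Ω → SimpleGraph (Fin n))
    (hmeas : ∀ i j : Fin n, Measurable fun ω => (G ω).Adj i j)
    (hindep : iIndepFun
      (fun (p : {p : Fin n × Fin n // p.1 < p.2}) (ω : Ω) =>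
        decide ((G ω).Adj p.1.1 p.1.2)) μ)
    (hprob : ∀ i j : Fin n, i ≠ j →
      μ {ω | (G ω).Adj i j} = ENNReal.ofReal (1 - Real.exp (-(w i * w j / ℓ)))) :
    ∀ i j : Fin n, i ≠ j →
      (∫ ω, ((∑ u, if (G ω).Reachable i u then w u else 0) *
             (∑ u, if (G ω).Reachable j u then w u else 0) *
             (if ¬ (G ω).Reachable i j then (1:ℝ) else 0)) ∂μ) ≤
      (∫ ω, (∑ u, if (G ω).Reachable i u then w u else 0) ∂μ) *
      (∫ ω, (∑ u, if (G ω).Reachable j u then w u else 0) ∂μ) :=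
  stmt10_general μ n w hw G hmeas hindep
end
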